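/- arXiv:math/0609616 — 2 statements merged into one kernel-verified Lean document; each statement's English description precedes it below -/
import Mathlib

section
/- For every integer n ≥ 2, if s ∈ B_n is a simple element conjugate to δ in B_n, then there exists a simple element α ∈ B_n with α⁻¹ s α = δ. -/
namespace Braid

/-- The braid relations on `m` generators (0-indexed; generator `i` is `σ_{i+1}`). -/
def braidRels (m : ℕ) : Set (FreeGroup (Fin m)) :=
  { r | (∃ i j : Fin m, i.val + 1 < j.val ∧
          r = FreeGroup.of i * FreeGroup.of j * (FreeGroup.of j * FreeGroup.of i)⁻¹) ∨
        (∃ i j : Fin m, j.val = i.val + 1 ∧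
          r = FreeGroup.of i * FreeGroup.of j * FreeGroup.of i *
              (FreeGroup.of j * FreeGroup.of i * FreeGroup.of j)⁻¹) }

/-- The braid group `B_n`, presented with generators `σ_1, …, σ_{n-1}` and the braid relations. -/
abbrev BraidGroup (n : ℕ) : Type := PresentedGroup (braidRels (n - 1))

/-- The Artin generator `σ_k` of `B_n`, for `1 ≤ k ≤ n - 1` (junk value `1` otherwise). -/
def σ (n : ℕ) (k : ℕ) : BraidGroup n :=
  if h : 1 ≤ k ∧ k ≤ n - 1 then PresentedGroup.of ⟨k - 1, by omega⟩ else 1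

/-- `sigmaBr n j i = σ_{j-1} σ_{j-2} ⋯ σ_i` (the identity when `j ≤ i`);
this is the element `σ_{[j→i]}`. -/
def sigmaBr (n : ℕ) (j i : ℕ) : BraidGroup n :=
  ((List.range (j - i)).map (fun k => σ n (j - 1 - k))).prod

/-- `δ = σ_{n-1} σ_{n-2} ⋯ σ_1 ∈ B_n`. -/
def braidDelta (n : ℕ) : BraidGroup n := sigmaBr n n 1

/-- `ε = σ_1 (σ_{n-1} σ_{n-2} ⋯ σ_1) ∈ B_n`. -/
def braidEps (n : ℕ) : BraidGroup n := σ n 1 * braidDelta n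

/-- The half twist `Δ = σ_1 (σ_2 σ_1) ⋯ (σ_{n-1} ⋯ σ_1) ∈ B_n`. -/
def halfTwist (n : ℕ) : BraidGroup n :=
  ((List.range (n - 1)).map (fun j => sigmaBr n (j + 2) 1)).prod

/-- An element `X ∈ B_n` is periodic if `X^m = Δ^{2j}` for some `m ≥ 1` and some integer `j`. -/
def IsPeriodic {n : ℕ} (X : BraidGroup n) : Prop :=
  ∃ m : ℕ, 1 ≤ m ∧ ∃ j : ℤ, X ^ m = halfTwist n ^ (2 * j)

/-- The submonoid of positive braids, generated by `σ_1, …, σ_{n-1}`. -/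
def positiveMonoid (n : ℕ) : Submonoid (BraidGroup n) :=
  Submonoid.closure { x | ∃ k, 1 ≤ k ∧ k ≤ n - 1 ∧ x = σ n k }

/-- An element `s ∈ B_n` is simple if both `s` and `s⁻¹Δ` are positive braids. -/
def IsSimpleElt {n : ℕ} (s : BraidGroup n) : Prop :=
  s ∈ positiveMonoid n ∧ s⁻¹ * halfTwist n ∈ positiveMonoid n

lemma swap_comm_of_ne {a b c d : ℕ} (h1 : a ≠ c) (h2 : a ≠ d) (h3 : b ≠ c) (h4 : b ≠ d) :
    Equiv.swap a b * Equiv.swap c d = Equiv.swap c d * Equiv.swap a b := by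
  ext x
  simp only [Equiv.Perm.mul_apply, Equiv.swap_apply_def]
  split_ifs <;> omega

set_option maxHeartbeats 1000000 in
lemma braid_swap (a : ℕ) :
    Equiv.swap a (a + 1) * Equiv.swap (a + 1) (a + 2) * Equiv.swap a (a + 1) =
      Equiv.swap (a + 1) (a + 2) * Equiv.swap a (a + 1) * Equiv.swap (a + 1) (a + 2) := by
  ext x
  simp only [Equiv.Perm.mul_apply, Equiv.swap_apply_def]
  split_ifs <;> omega

/-- The homomorphism `π : B_n → Sym(ℕ)` sending `σ_k` to the transposition `(k, k+1)`. -/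
def permHom (n : ℕ) : BraidGroup n →* Equiv.Perm ℕ :=
  PresentedGroup.toGroup (f := fun i : Fin (n - 1) => Equiv.swap (i.val + 1) (i.val + 2))
    (by
      rintro r (⟨i, j, hij, rfl⟩ | ⟨i, j, hij, rfl⟩) <;>
        simp only [map_mul, map_inv, FreeGroup.lift_apply_of, mul_inv_eq_one]
      · exact swap_comm_of_ne (by omega) (by omega) (by omega) (by omega)
      · rw [hij]
        exact braid_swap (i.val + 1))

/-- The exponent-sum homomorphism, multiplicatively valued. -/
def expSumHom (n : ℕ) : BraidGroup n →* Multiplicative ℤ :=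
  PresentedGroup.toGroup (f := fun _ : Fin (n - 1) => Multiplicative.ofAdd (1 : ℤ))
    (by
      rintro r (⟨i, j, hij, rfl⟩ | ⟨i, j, hij, rfl⟩) <;>
        simp only [map_mul, map_inv, FreeGroup.lift_apply_of] <;> group)

/-- The exponent sum `e : B_n → ℤ`. -/
def e {n : ℕ} (X : BraidGroup n) : ℤ := Multiplicative.toAdd (expSumHom n X)

end Braid

namespace Braid

/-- Defining relations of the Artin–Tits group of type `B` on `m` generators
(0-indexed; generator `i` is `s_{i+1}`). -/
def typeBRels (m : ℕ) : Set (FreeGroup (Fin m)) :=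
  { r | (∃ i j : Fin m, i.val + 1 < j.val ∧
          r = FreeGroup.of i * FreeGroup.of j * (FreeGroup.of j * FreeGroup.of i)⁻¹) ∨
        (∃ i j : Fin m, j.val = i.val + 1 ∧ 1 ≤ i.val ∧
          r = FreeGroup.of i * FreeGroup.of j * FreeGroup.of i *
              (FreeGroup.of j * FreeGroup.of i * FreeGroup.of j)⁻¹) ∨
        (∃ i j : Fin m, i.val = 0 ∧ j.val = 1 ∧
          r = FreeGroup.of i * FreeGroup.of j * FreeGroup.of i * FreeGroup.of j *
              (FreeGroup.of j * FreeGroup.of i * FreeGroup.of j * FreeGroup.of i)⁻¹) }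

/-- The Artin–Tits group `A(B_m)` of type `B` with `m` generators `s_1, …, s_m`. -/
abbrev ArtinTitsB (m : ℕ) : Type := PresentedGroup (typeBRels m)

/-- The generator `s_k` of `A(B_m)`, for `1 ≤ k ≤ m` (junk value `1` otherwise). -/
def sGen (m : ℕ) (k : ℕ) : ArtinTitsB m :=
  if h : 1 ≤ k ∧ k ≤ m then PresentedGroup.of ⟨k - 1, by omega⟩ else 1

/-- The band generator `a_{t,s} = (σ_{t-1}⋯σ_{s+1}) σ_s (σ_{s+1}⁻¹⋯σ_{t-1}⁻¹) ∈ B_m`. -/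
def bandGen (m : ℕ) (t s : ℕ) : BraidGroup m :=
  sigmaBr m t (s + 1) * σ m s * (sigmaBr m t (s + 1))⁻¹

end Braid

/-!
A positive word conjugate to `δ` has exponent sum `n - 1`, and its permutation is an `n`-cycle,
so no generator can be missing: the word is `σ_1, …, σ_{n-1}` in some order. Call `i` an ascent
of such a word if `σ_i` occurs before `σ_{i+1}`. For the least ascent `i`, nothing in front of
`σ_i` is `σ_{i±1}`, so `σ_i` can be commuted to the front, and conjugating by `σ_i` moves it to
the back; this turns the ascent `i` into `i - 1` (or removes it when `i = 1`) and leaves the other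
ascents alone. When no ascents remain the word is `σ_{n-1} ⋯ σ_1 = δ`, and the accumulated
conjugator is `T_{u₁} ⋯ T_{uₖ}`, `T_u = σ_u ⋯ σ_1`, over the ascents `u₁ < ⋯ < uₖ`, because
`T_i = σ_i T_{i-1}`. This product left-divides `Δ = T_1 ⋯ T_{n-1}`: conjugation by `T_u` maps
`σ_k` to `σ_{k+1}` for `k < u`, so each `T_u` can be pulled to the left across a positive word
in `σ_1, …, σ_{u-1}`.
-/

namespace Braid

variable {n : ℕ}

lemma sigma_eq_presentedGroup_of {k : ℕ} (h1 : 1 ≤ k) (h2 : k ≤ n - 1) :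
    σ n k = PresentedGroup.of ⟨k - 1, by omega⟩ :=
  dif_pos ⟨h1, h2⟩

lemma sigma_eq_one {k : ℕ} (h : ¬(1 ≤ k ∧ k ≤ n - 1)) : σ n k = 1 :=
  dif_neg h

lemma sigma_commute {i j : ℕ} (h : i + 2 ≤ j) : Commute (σ n i) (σ n j) := by
  by_cases hi : 1 ≤ i ∧ i ≤ n - 1
  · by_cases hj : 1 ≤ j ∧ j ≤ n - 1
    · rw [sigma_eq_presentedGroup_of hi.1 hi.2, sigma_eq_presentedGroup_of hj.1 hj.2]
      exact PresentedGroup.mk_eq_mk_of_mul_inv_mem (Or.inl ⟨_, _, by simp; omega, rfl⟩)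
    · rw [sigma_eq_one hj]
      exact Commute.one_right _
  · rw [sigma_eq_one hi]
    exact Commute.one_left _

lemma sigma_braid {i : ℕ} (hi : 1 ≤ i) (hin : i + 1 ≤ n - 1) :
    σ n i * σ n (i + 1) * σ n i = σ n (i + 1) * σ n i * σ n (i + 1) := by
  rw [sigma_eq_presentedGroup_of hi (by omega), sigma_eq_presentedGroup_of (by omega) hin]
  exact PresentedGroup.mk_eq_mk_of_mul_inv_mem (Or.inr ⟨_, _, by simp; omega, rfl⟩)

def wordProd (n : ℕ) (L : List ℕ) : BraidGroup n := (L.map (σ n)).prod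

@[simp]
lemma wordProd_nil : wordProd n [] = 1 := rfl

@[simp]
lemma wordProd_cons (k : ℕ) (L : List ℕ) : wordProd n (k :: L) = σ n k * wordProd n L :=
  List.prod_cons

@[simp]
lemma wordProd_append (L₁ L₂ : List ℕ) :
    wordProd n (L₁ ++ L₂) = wordProd n L₁ * wordProd n L₂ := by
  simp [wordProd]

lemma sigmaBr_eq_wordProd (j i : ℕ) :
    sigmaBr n j i = wordProd n (List.range' i (j - i)).reverse := by
  rw [List.reverse_range', wordProd, List.map_map, sigmaBr]
  refine congrArg List.prod (List.map_congr_left fun k hk => ?_)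
  simp only [List.mem_range] at hk
  simp only [Function.comp_apply]
  congr 1
  omega

lemma braidDelta_eq_wordProd : braidDelta n = wordProd n (List.range' 1 (n - 1)).reverse :=
  sigmaBr_eq_wordProd n 1

lemma sigmaBr_one_one : sigmaBr n 1 1 = 1 := rfl

lemma sigmaBr_succ_one (u : ℕ) : sigmaBr n (u + 2) 1 = σ n (u + 1) * sigmaBr n (u + 1) 1 := by
  simp [sigmaBr_eq_wordProd, List.range'_1_concat, add_comm]

lemma commute_sigma_sigmaBr {k u : ℕ} (h : u + 2 ≤ k) :
    Commute (σ n k) (sigmaBr n (u + 1) 1) := by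
  rw [sigmaBr_eq_wordProd]
  refine Commute.list_prod_right _ _ fun x hx => ?_
  simp only [List.mem_map, List.mem_reverse, List.mem_range'_1] at hx
  obtain ⟨j, hj, rfl⟩ := hx
  exact (sigma_commute (by omega)).symm

lemma sigmaBr_mul_sigma_succ {j v : ℕ} (hj : 1 ≤ j) (hjv : j < v) (hv : v ≤ n - 1) :
    sigmaBr n (v + 1) 1 * σ n (j + 1) = σ n j * sigmaBr n (v + 1) 1 := by
  induction v, hjv using Nat.le_induction with
  | base =>
    obtain ⟨j, rfl⟩ : ∃ i, j = i + 1 := ⟨j - 1, by omega⟩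
    have hc := commute_sigma_sigmaBr (n := n) (k := j + 2) (u := j) le_rfl
    rw [sigmaBr_succ_one, sigmaBr_succ_one]
    calc σ n (j + 2) * (σ n (j + 1) * sigmaBr n (j + 1) 1) * σ n (j + 2)
        = σ n (j + 2) * σ n (j + 1) * σ n (j + 2) * sigmaBr n (j + 1) 1 := by
          simp only [mul_assoc, hc.eq]
      _ = σ n (j + 1) * (σ n (j + 2) * (σ n (j + 1) * sigmaBr n (j + 1) 1)) := by
          rw [← sigma_braid (by omega) hv]
          group
  | succ v hjv ih =>
    rw [sigmaBr_succ_one, mul_assoc, ih (by omega), ← mul_assoc,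
      (sigma_commute (n := n) (by omega : j + 2 ≤ v + 1)).symm.eq, mul_assoc]

section Positive

def positiveMonoidLE (n m : ℕ) : Submonoid (BraidGroup n) :=
  Submonoid.closure {x | ∃ k, 1 ≤ k ∧ k ≤ m ∧ x = σ n k}

lemma positiveMonoidLE_mono : Monotone (positiveMonoidLE n) :=
  fun _ _ h => Submonoid.closure_mono fun _ ⟨k, h1, h2, hx⟩ => ⟨k, h1, h2.trans h, hx⟩

lemma sigma_mem_positiveMonoidLE {k m : ℕ} (h : k ≤ m) : σ n k ∈ positiveMonoidLE n m := by
  by_cases hk : 1 ≤ k ∧ k ≤ n - 1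
  · exact Submonoid.subset_closure ⟨k, hk.1, h, rfl⟩
  · rw [sigma_eq_one hk]
    exact one_mem _

lemma wordProd_mem_positiveMonoidLE {L : List ℕ} {m : ℕ} (h : ∀ k ∈ L, k ≤ m) :
    wordProd n L ∈ positiveMonoidLE n m :=
  Submonoid.list_prod_mem _ <| by
    simpa using fun k hk => sigma_mem_positiveMonoidLE (h k hk)

lemma sigmaBr_mem_positiveMonoidLE {u m : ℕ} (h : u ≤ m) :
    sigmaBr n (u + 1) 1 ∈ positiveMonoidLE n m :=
  sigmaBr_eq_wordProd (u + 1) 1 ▸ wordProd_mem_positiveMonoidLE (by simp; omega)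

lemma exists_wordProd_eq {s : BraidGroup n} (h : s ∈ positiveMonoid n) :
    ∃ L : List ℕ, (∀ k ∈ L, 1 ≤ k ∧ k ≤ n - 1) ∧ s = wordProd n L := by
  induction h using Submonoid.closure_induction with
  | mem x hx =>
    obtain ⟨k, h1, h2, rfl⟩ := hx
    exact ⟨[k], by simp [h1, h2], by simp⟩
  | one => exact ⟨[], by simp, rfl⟩
  | mul x y _ _ ihx ihy =>
    obtain ⟨L₁, hL₁, rfl⟩ := ihx
    obtain ⟨L₂, hL₂, rfl⟩ := ihy
    exact ⟨L₁ ++ L₂, by simpa using fun k hk => hk.elim (hL₁ k) (hL₂ k), by simp⟩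

def staircase (n : ℕ) (us : List ℕ) : BraidGroup n :=
  (us.map fun u => sigmaBr n (u + 1) 1).prod

@[simp]
lemma staircase_nil : staircase n [] = 1 := rfl

@[simp]
lemma staircase_cons (u : ℕ) (us : List ℕ) :
    staircase n (u :: us) = sigmaBr n (u + 1) 1 * staircase n us :=
  List.prod_cons

@[simp]
lemma staircase_append (us vs : List ℕ) :
    staircase n (us ++ vs) = staircase n us * staircase n vs := by
  simp [staircase]

lemma halfTwist_eq_staircase : halfTwist n = staircase n (List.range' 1 (n - 1)) := by
  rw [staircase, List.range'_eq_map_range, List.map_map, halfTwist]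
  refine congrArg List.prod (List.map_congr_left fun j _ => ?_)
  simp only [Function.comp_apply]
  congr 1
  omega

lemma staircase_mem_positiveMonoidLE {us : List ℕ} {m : ℕ} (h : ∀ u ∈ us, u ≤ m) :
    staircase n us ∈ positiveMonoidLE n m :=
  Submonoid.list_prod_mem _ <| by
    simpa using fun u hu => sigmaBr_mem_positiveMonoidLE (h u hu)

lemma inv_sigmaBr_mul_mul_mem_positiveMonoidLE {u : ℕ} (hu : u + 1 ≤ n - 1) {c : BraidGroup n}
    (hc : c ∈ positiveMonoidLE n u) :
    (sigmaBr n (u + 2) 1)⁻¹ * c * sigmaBr n (u + 2) 1 ∈ positiveMonoidLE n (u + 1) := by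
  induction hc using Submonoid.closure_induction with
  | mem x hx =>
    obtain ⟨k, h1, h2, rfl⟩ := hx
    rw [mul_assoc, ← sigmaBr_mul_sigma_succ h1 (by omega) hu, inv_mul_cancel_left]
    exact sigma_mem_positiveMonoidLE (by omega)
  | one => simp
  | mul x y _ _ hx hy => simpa [mul_assoc] using mul_mem hx hy

lemma range'_one_eq_append {u m : ℕ} (h : u + 1 ≤ m) :
    List.range' 1 m = List.range' 1 u ++ [u + 1] ++ List.range' (u + 2) (m - (u + 1)) := by
  rw [List.append_assoc, List.singleton_append, ← List.range'_succ (step := 1), add_comm u 1,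
    List.range'_append_1]
  congr 1
  omega

lemma inv_staircase_mul_mem_positiveMonoidLE {us : List ℕ} (hus : us.Pairwise (· < ·)) :
    ∀ m, (∀ u ∈ us, u ≤ m) → m ≤ n - 1 →
      (staircase n us)⁻¹ * staircase n (List.range' 1 m) ∈ positiveMonoidLE n m := by
  induction us using List.reverseRecOn with
  | nil =>
    intro m _ _
    simpa using staircase_mem_positiveMonoidLE (by simp; omega)
  | append_singleton vs u ih =>
    intro m hm hmn
    rw [List.pairwise_append] at hus
    have hvs : ∀ v ∈ vs, v < u := fun v hv => hus.2.2 v hv u (List.mem_singleton_self u)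
    have hum : u ≤ m := hm u (by simp)
    rcases u with _ | u
    · obtain rfl : vs = [] := List.eq_nil_iff_forall_not_mem.mpr fun v hv => by
        have := hvs v hv; omega
      simpa [sigmaBr_one_one] using staircase_mem_positiveMonoidLE (by simp; omega)
    have hc := ih hus.1 u (fun v hv => by have := hvs v hv; omega) (by omega)
    have hrest := staircase_mem_positiveMonoidLE (n := n) (m := m)
      (us := List.range' (u + 2) (m - (u + 1))) (by simp; omega)
    rw [range'_one_eq_append hum]
    convert mul_mem (positiveMonoidLE_mono (by omega)
      (inv_sigmaBr_mul_mul_mem_positiveMonoidLE (by omega) hc)) hrest using 1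
    simp only [staircase_append, staircase_cons, staircase_nil, mul_one]
    group

lemma isSimpleElt_staircase {us : List ℕ} (hus : us.Pairwise (· < ·))
    (hb : ∀ u ∈ us, u ≤ n - 1) : IsSimpleElt (staircase n us) :=
  ⟨staircase_mem_positiveMonoidLE hb,
    halfTwist_eq_staircase (n := n) ▸ inv_staircase_mul_mem_positiveMonoidLE hus _ hb le_rfl⟩

end Positive

section Invariants

variable {L : List ℕ}

lemma expSumHom_wordProd (hL : ∀ k ∈ L, 1 ≤ k ∧ k ≤ n - 1) :
    expSumHom n (wordProd n L) = Multiplicative.ofAdd (L.length : ℤ) := by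
  induction L with
  | nil => rfl
  | cons k L ih =>
    obtain ⟨h1, h2⟩ := hL k (by simp)
    rw [wordProd_cons, map_mul, ih fun j hj => hL j (by simp [hj]),
      sigma_eq_presentedGroup_of h1 h2]
    simp [expSumHom, PresentedGroup.toGroup.of, ← ofAdd_add, add_comm]

lemma length_eq_of_isConj_braidDelta (hL : ∀ k ∈ L, 1 ≤ k ∧ k ≤ n - 1)
    (hconj : IsConj (wordProd n L) (braidDelta n)) : L.length = n - 1 := by
  have h := isConj_iff_eq.mp ((expSumHom n).map_isConj hconj)
  rw [expSumHom_wordProd hL, braidDelta_eq_wordProd, expSumHom_wordProd (by simp; omega)] at h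
  simpa using h

lemma permHom_sigma {k : ℕ} (h1 : 1 ≤ k) (h2 : k ≤ n - 1) :
    permHom n (σ n k) = Equiv.swap k (k + 1) := by
  rw [sigma_eq_presentedGroup_of h1 h2, permHom, PresentedGroup.toGroup.of]
  show Equiv.swap (k - 1 + 1) (k - 1 + 2) = _
  congr 1 <;> omega

lemma permHom_sigmaBr_apply {v : ℕ} (hv : v ≤ n - 1) (x : ℕ) :
    permHom n (sigmaBr n (v + 1) 1) x =
      if x = 1 then v + 1 else if x ≤ v + 1 then x - 1 else x := by
  induction v with
  | zero =>
    simp only [zero_add, sigmaBr_one_one, map_one, Equiv.Perm.coe_one, id_eq]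
    split_ifs <;> omega
  | succ v ih =>
    rw [sigmaBr_succ_one, map_mul, Equiv.Perm.mul_apply, ih (by omega),
      permHom_sigma (by omega) hv, Equiv.swap_apply_def]
    split_ifs <;> omega

lemma permHom_braidDelta_pow_apply {i : ℕ} (hi : i ≤ n - 1) :
    (permHom n (braidDelta n) ^ i) n = n - i := by
  induction i with
  | zero => rfl
  | succ i ih =>
    have hδ := permHom_sigmaBr_apply (n := n) le_rfl (n - i)
    rw [Nat.sub_add_cancel (by omega)] at hδ
    rw [pow_succ', Equiv.Perm.mul_apply, ih (by omega), braidDelta, hδ]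
    split_ifs <;> omega

lemma permHom_wordProd_le_iff (hL : ∀ k ∈ L, 1 ≤ k ∧ k ≤ n - 1) {m : ℕ} (hm : m ∉ L)
    (x : ℕ) : permHom n (wordProd n L) x ≤ m ↔ x ≤ m := by
  induction L with
  | nil => rfl
  | cons k L ih =>
    obtain ⟨h1, h2⟩ := hL k (by simp)
    have hkm : k ≠ m := fun h => hm (h ▸ List.mem_cons_self)
    rw [wordProd_cons, map_mul, Equiv.Perm.mul_apply, permHom_sigma h1 h2,
      ← ih (fun j hj => hL j (by simp [hj])) (fun h => hm (List.mem_cons_of_mem _ h)),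
      Equiv.swap_apply_def]
    split_ifs <;> omega

lemma permHom_wordProd_mem_Ioc_iff (hL : ∀ k ∈ L, 1 ≤ k ∧ k ≤ n - 1) {a b : ℕ} (ha : a ∉ L)
    (hb : b ∉ L) (x : ℕ) :
    permHom n (wordProd n L) x ∈ Finset.Ioc a b ↔ x ∈ Finset.Ioc a b := by
  simp only [Finset.mem_Ioc, ← not_le, permHom_wordProd_le_iff hL ha, permHom_wordProd_le_iff hL hb]

lemma le_card_of_injOn_pow_apply {α : Type*} {f : Equiv.Perm α} {T : Finset α}
    (hT : ∀ z, f z ∈ T ↔ z ∈ T) {x : α} (hx : x ∈ T) {N : ℕ}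
    (hinj : Set.InjOn (fun i => (f ^ i) x) (Set.Iio N)) : N ≤ T.card := by
  have hmaps : ∀ i, (f ^ i) x ∈ T := fun i => by
    induction i with
    | zero => exact hx
    | succ i ih => rwa [pow_succ', Equiv.Perm.mul_apply, hT]
  simpa using Finset.card_le_card_of_injOn (s := Finset.range N) _ (fun i _ => hmaps i)
    (by rwa [Finset.coe_range])

lemma mem_of_isConj_braidDelta (hL : ∀ k ∈ L, 1 ≤ k ∧ k ≤ n - 1)
    (hconj : IsConj (wordProd n L) (braidDelta n)) {k : ℕ} (hk1 : 1 ≤ k) (hkn : k ≤ n - 1) :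
    k ∈ L := by
  by_contra hkL
  obtain ⟨g, hg⟩ := isConj_iff.mp ((permHom n).map_isConj hconj)
  set f := permHom n (wordProd n L)
  -- The orbit of `g⁻¹ n` under `f` has `n` points, but `f` preserves the blocks `(0, k]` and
  -- `(k, n]` and fixes every point outside `[1, n]`.
  set x := g⁻¹ n
  have hinj : Set.InjOn (fun i => (f ^ i) x) (Set.Iio n) := by
    have horbit : ∀ i ≤ n - 1, (f ^ i) x = g⁻¹ (n - i) := fun i hi => by
      rw [← permHom_braidDelta_pow_apply hi, ← hg, conj_pow]
      simp [x]
    intro i hi j hj hij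
    simp only [Set.mem_Iio] at hi hj
    have := g⁻¹.injective ((horbit i (by omega)).symm.trans (hij.trans (horbit j (by omega))))
    omega
  have hmoved : f x ≠ x := fun h => by
    have := hinj (show 1 ∈ Set.Iio n by simp; omega) (show 0 ∈ Set.Iio n by simp; omega)
      (by simpa using h)
    omega
  have hnotin : ∀ y, y = 0 ∨ n ≤ y → y ∉ L := fun y hy h => by have := hL y h; omega
  rcases Nat.eq_zero_or_pos x with hx0 | hx0
  · have : f x ≤ 0 := (permHom_wordProd_le_iff hL (hnotin 0 (.inl rfl)) x).mpr hx0.le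
    omega
  rcases le_or_gt x k with hxk | hxk
  · have := le_card_of_injOn_pow_apply (permHom_wordProd_mem_Ioc_iff hL (hnotin 0 (.inl rfl)) hkL)
      (Finset.mem_Ioc.mpr ⟨hx0, hxk⟩) hinj
    rw [Nat.card_Ioc] at this
    omega
  rcases le_or_gt x n with hxn | hxn
  · have := le_card_of_injOn_pow_apply
      (permHom_wordProd_mem_Ioc_iff hL hkL (hnotin n (.inr le_rfl))) (Finset.mem_Ioc.mpr ⟨hxk, hxn⟩)
      hinj
    rw [Nat.card_Ioc] at this
    omega
  · have : f x ∈ Finset.Ioc (x - 1) x := (permHom_wordProd_mem_Ioc_iff hL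
      (hnotin (x - 1) (.inr (by omega))) (hnotin x (.inr hxn.le)) x).mpr (by simp; omega)
    simp only [Finset.mem_Ioc] at this
    omega

lemma perm_range'_of_isConj_braidDelta (hL : ∀ k ∈ L, 1 ≤ k ∧ k ≤ n - 1)
    (hconj : IsConj (wordProd n L) (braidDelta n)) : L.Perm (List.range' 1 (n - 1)) := by
  refine ((List.subperm_of_subset List.nodup_range' fun k hk => ?_).perm_of_length_le ?_).symm
  · simp only [List.mem_range'_1] at hk
    exact mem_of_isConj_braidDelta hL hconj hk.1 (by omega)
  · simp [length_eq_of_isConj_braidDelta hL hconj]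

end Invariants

section IdxOf

variable {α : Type*} [BEq α] [LawfulBEq α] {a b : List α} {x j k : α}

lemma idxOf_lt_idxOf_rotate_iff (hj : j ≠ x) (hk : k ≠ x) :
    (a ++ b ++ [x]).idxOf j < (a ++ b ++ [x]).idxOf k ↔
      (a ++ x :: b).idxOf j < (a ++ x :: b).idxOf k := by
  simp only [List.idxOf_append, List.idxOf_cons_ne _ hj.symm, List.idxOf_cons_ne _ hk.symm,
    List.mem_append, List.length_append]
  by_cases hja : j ∈ a <;> by_cases hjb : j ∈ b <;> by_cases hka : k ∈ a <;>
    by_cases hkb : k ∈ b <;> simp [hja, hjb, hka, hkb] <;> grind [List.idxOf_lt_length_of_mem]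

lemma idxOf_lt_idxOf_append_cons (hj : j ∈ a) (hx : x ∉ a) :
    (a ++ x :: b).idxOf j < (a ++ x :: b).idxOf x := by
  simp [List.idxOf_append, hj, hx, List.idxOf_lt_length_of_mem hj]

end IdxOf

section Ascents

def ascents (n : ℕ) (l : List ℕ) : List ℕ :=
  (List.range' 1 (n - 2)).filter fun i => l.idxOf i < l.idxOf (i + 1)

lemma mem_ascents {l : List ℕ} {i : ℕ} :
    i ∈ ascents n l ↔ (1 ≤ i ∧ i + 2 ≤ n) ∧ l.idxOf i < l.idxOf (i + 1) := by
  simp only [ascents, List.mem_filter, List.mem_range'_1, decide_eq_true_eq]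
  omega

lemma ascents_pairwise (l : List ℕ) : (ascents n l).Pairwise (· < ·) :=
  List.Pairwise.filter _ List.pairwise_lt_range'

variable {l : List ℕ}

lemma mem_iff_of_perm_range' (hl : l.Perm (List.range' 1 (n - 1))) {k : ℕ} :
    k ∈ l ↔ 1 ≤ k ∧ k ≤ n - 1 := by
  rw [hl.mem_iff, List.mem_range'_1]
  omega

lemma idxOf_succ_lt_idxOf_of_not_mem_ascents (hl : l.Perm (List.range' 1 (n - 1))) {i : ℕ}
    (hi1 : 1 ≤ i) (hin : i + 2 ≤ n) (h : i ∉ ascents n l) : l.idxOf (i + 1) < l.idxOf i := by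
  have hne : l.idxOf i ≠ l.idxOf (i + 1) := fun h' =>
    absurd ((List.idxOf_inj ((mem_iff_of_perm_range' hl).mpr ⟨hi1, by omega⟩)).mp h') (by omega)
  rw [mem_ascents] at h
  omega

lemma eq_reverse_range'_of_ascents_eq_nil (hl : l.Perm (List.range' 1 (n - 1)))
    (h : ascents n l = []) : l = (List.range' 1 (n - 1)).reverse := by
  have hnd : l.Nodup := hl.nodup_iff.mpr List.nodup_range'
  have hanti : ∀ i j, 1 ≤ i → i < j → j ≤ n - 1 → l.idxOf j < l.idxOf i := by
    intro i j hi hij hjn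
    induction j, hij using Nat.le_induction with
    | base => exact idxOf_succ_lt_idxOf_of_not_mem_ascents hl hi (by omega) (by simp [h])
    | succ j hij ih =>
      exact (idxOf_succ_lt_idxOf_of_not_mem_ascents hl (by omega) (by omega) (by simp [h])).trans
        (ih (by omega))
  have hdesc : l.Pairwise (· > ·) := by
    refine List.pairwise_iff_getElem.mpr fun p q hp hq hpq => ?_
    have hmp := (mem_iff_of_perm_range' hl).mp (List.getElem_mem hp)
    have hmq := (mem_iff_of_perm_range' hl).mp (List.getElem_mem hq)
    have hne : l[p] ≠ l[q] := fun h' => by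
      have := hnd.idxOf_getElem p hp
      rw [h', hnd.idxOf_getElem q hq] at this
      omega
    by_contra hle
    have := hanti l[p] l[q] hmp.1 (by omega) hmq.2
    rw [hnd.idxOf_getElem p hp, hnd.idxOf_getElem q hq] at this
    omega
  refine hdesc.eq_of_mem_iff (List.pairwise_reverse.mpr List.pairwise_lt_range') fun k => ?_
  rw [List.mem_reverse, hl.mem_iff]

variable {i : ℕ} {rest a b : List ℕ}

lemma commute_sigma_wordProd_of_ascents_eq_cons (hl : l.Perm (List.range' 1 (n - 1)))
    (hasc : ascents n l = i :: rest) (hab : l = a ++ i :: b) :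
    Commute (σ n i) (wordProd n a) := by
  have hrest := (List.pairwise_cons.mp (hasc ▸ ascents_pairwise (n := n) l)).1
  obtain ⟨⟨-, hin⟩, hup⟩ := mem_ascents.mp (hasc ▸ List.mem_cons_self : i ∈ ascents n l)
  have hia : i ∉ a := (List.nodup_middle.mp (hab ▸ hl.nodup_iff.mpr List.nodup_range')).notMem
    ∘ List.mem_append_left b
  refine Commute.list_prod_right _ _ fun y hy => ?_
  obtain ⟨j, hj, rfl⟩ := List.mem_map.mp hy
  have hji : l.idxOf j < l.idxOf i := hab ▸ idxOf_lt_idxOf_append_cons hj hia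
  have hne : j ≠ i := fun h => hia (h ▸ hj)
  have hne_succ : j ≠ i + 1 := fun h => by rw [h] at hji; omega
  have hne_pred : j + 1 ≠ i := by
    intro h
    have hj1 := (mem_iff_of_perm_range' hl).mp (hab ▸ List.mem_append_left _ hj)
    have hmem : j ∈ ascents n l := mem_ascents.mpr ⟨⟨hj1.1, by omega⟩, h ▸ hji⟩
    rw [hasc, List.mem_cons] at hmem
    rcases hmem with h' | h'
    · omega
    · have := hrest j h'; omega
  rcases Nat.lt_or_gt_of_ne hne with h | h
  · exact (sigma_commute (by omega)).symm
  · exact sigma_commute (by omega)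

lemma ascents_rotate (hl : l.Perm (List.range' 1 (n - 1))) (hasc : ascents n l = i :: rest)
    (hab : l = a ++ i :: b) :
    ascents n (a ++ b ++ [i]) = (if 2 ≤ i then [i - 1] else []) ++ rest := by
  have hsorted := hasc ▸ ascents_pairwise (n := n) l
  have hrest := (List.pairwise_cons.mp hsorted).1
  obtain ⟨⟨hi1, hin⟩, -⟩ := mem_ascents.mp (hasc ▸ List.mem_cons_self : i ∈ ascents n l)
  have hiab : i ∉ a ++ b :=
    (List.nodup_cons.mp (List.nodup_middle.mp (hab ▸ hl.nodup_iff.mpr List.nodup_range'))).1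
  have hmem : ∀ k, 1 ≤ k → k ≤ n - 1 → k ≠ i → k ∈ a ++ b := fun k h1 h2 hki => by
    have := (mem_iff_of_perm_range' hl).mpr ⟨h1, h2⟩
    rw [hab] at this
    simp only [List.mem_append, List.mem_cons] at this ⊢
    tauto
  refine (ascents_pairwise _).eq_of_mem_iff ?_ fun j => ?_
  · split_ifs
    · exact List.pairwise_cons.mpr ⟨fun x hx => by have := hrest x hx; omega, hsorted.of_cons⟩
    · exact hsorted.of_cons
  have hj_rest : j ∈ rest ↔ j ∈ ascents n l ∧ j ≠ i := by
    rw [hasc, List.mem_cons]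
    exact ⟨fun h => ⟨Or.inr h, by have := hrest j h; omega⟩, by tauto⟩
  rw [mem_ascents, List.mem_append, hj_rest, mem_ascents]
  by_cases hji : j = i
  · subst hji
    have := idxOf_lt_idxOf_append_cons (b := []) (hmem (j + 1) (by omega) (by omega) (by omega))
      hiab
    split_ifs <;> simp only [List.mem_singleton, List.mem_nil_iff, false_or] <;> omega
  by_cases hj1 : j + 1 = i
  · subst hj1
    split_ifs
    · have := idxOf_lt_idxOf_append_cons (b := []) (hmem j (by omega) (by omega) (by omega)) hiab
      simp only [List.mem_singleton]
      omega
    · simp only [List.mem_nil_iff, false_or]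
      omega
  · rw [idxOf_lt_idxOf_rotate_iff hji hj1, ← hab]
    split_ifs <;> simp only [List.mem_singleton, List.mem_nil_iff, false_or] <;> omega

lemma staircase_cons_eq_sigma_mul (hi : 1 ≤ i) :
    staircase n (i :: rest) = σ n i * staircase n ((if 2 ≤ i then [i - 1] else []) ++ rest) := by
  obtain ⟨u, rfl⟩ : ∃ u, i = u + 1 := ⟨i - 1, by omega⟩
  rw [staircase_cons, sigmaBr_succ_one, mul_assoc]
  split_ifs with h
  · simp
  · obtain rfl : u = 0 := by omega
    simp [sigmaBr_one_one]

theorem semiconjBy_staircase_ascents (hl : l.Perm (List.range' 1 (n - 1))) :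
    SemiconjBy (staircase n (ascents n l)) (braidDelta n) (wordProd n l) := by
  induction hsum : (ascents n l).sum using Nat.strong_induction_on generalizing l with
  | _ μ ih =>
  rcases hasc : ascents n l with _ | ⟨i, rest⟩
  · rw [eq_reverse_range'_of_ascents_eq_nil hl hasc, ← braidDelta_eq_wordProd]
    exact SemiconjBy.one_left _
  obtain ⟨⟨hi1, hin⟩, -⟩ := mem_ascents.mp (hasc ▸ List.mem_cons_self : i ∈ ascents n l)
  obtain ⟨a, b, hab⟩ := List.append_of_mem ((mem_iff_of_perm_range' hl).mpr ⟨hi1, by omega⟩)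
  have hl' : (a ++ b ++ [i]).Perm (List.range' 1 (n - 1)) :=
    (List.perm_append_singleton _ _).trans (List.perm_middle.symm.trans (hab ▸ hl))
  have hasc' := ascents_rotate hl hasc hab
  have ih' := ih _ (by rw [← hsum, hasc', hasc]; split_ifs <;> simp <;> omega) hl' rfl
  rw [staircase_cons_eq_sigma_mul hi1, ← hasc']
  refine SemiconjBy.mul_left ?_ ih'
  have hcomm := commute_sigma_wordProd_of_ascents_eq_cons hl hasc hab
  simp only [SemiconjBy, hab, wordProd_append, wordProd_cons, wordProd_nil, mul_one, ← mul_assoc,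
    hcomm.eq]

end Ascents

end Braid

theorem simple_conj_delta_by_simple_general (n : ℕ) (s : Braid.BraidGroup n)
    (hs : Braid.IsSimpleElt s) (hconj : IsConj s (Braid.braidDelta n)) :
    ∃ α : Braid.BraidGroup n, Braid.IsSimpleElt α ∧ α⁻¹ * s * α = Braid.braidDelta n := by
  obtain ⟨L, hL, rfl⟩ := Braid.exists_wordProd_eq hs.1
  have hperm := Braid.perm_range'_of_isConj_braidDelta hL hconj
  refine ⟨Braid.staircase n (Braid.ascents n L),
    Braid.isSimpleElt_staircase (Braid.ascents_pairwise L) fun u hu => ?_, ?_⟩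
  · have := (Braid.mem_ascents.mp hu).1
    omega
  · rw [mul_assoc, ← (Braid.semiconjBy_staircase_ascents hperm).eq, inv_mul_cancel_left]

/-- every simple conjugate of `δ` is conjugated to `δ` by a simple element. -/
theorem simple_conj_delta_by_simple (n : ℕ) (hn : 2 ≤ n) (s : Braid.BraidGroup n)
    (hs : Braid.IsSimpleElt s) (hconj : IsConj s (Braid.braidDelta n)) :
    ∃ α : Braid.BraidGroup n, Braid.IsSimpleElt α ∧ α⁻¹ * s * α = Braid.braidDelta n :=
  simple_conj_delta_by_simple_general n s hs hconj
end

section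
/- Let n ≥ 3 and let 1 ≤ u < v ≤ n−1. Then in B_{2n−2} one has θ′((s_{u+1}⁻¹ s_{u+2}⁻¹ ⋯ s_{v−1}⁻¹)(s_v s_{v−1} ⋯ s_{u+1})) = a_{v,u} · a_{v+n−1,u+n−1}, where the first factor is the empty product (identity) when v = u+1. -/
/-!
For `i ≥ 2`, `θ'(s_i) = σ_{i-1} σ_{i+n-2}` is a product of generators from the two halves
`σ_1, …, σ_{n-2}` and `σ_n, …, σ_{2n-3}` of `B_{2n-2}`, which commute with each other. Hence `θ'`
sends the descending word `s_j ⋯ s_{i+1}` to `σ_{[j→i]} σ_{[j+n-1→i+n-1]}`, and the image of the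
word in question splits as `σ_{[v-1→u]}⁻¹ σ_{[v→u]}` times its shift by `n - 1`. Each factor is a
band generator by the identity `a_{t+1,s} = σ_{[t→s]}⁻¹ σ_{[t+1→s]}`, which follows by induction on
`t` from `a_{t+1,s} = σ_t a_{t,s} σ_t⁻¹` and the braid relation
`σ_t σ_{t-1} σ_t⁻¹ = σ_{t-1}⁻¹ σ_t σ_{t-1}`.
-/

namespace Braid

lemma prod_range_map_inv {G : Type*} [Group G] (f : ℕ → G) (d : ℕ) :
    ((List.range d).map fun k => (f k)⁻¹).prod =
      ((List.range d).map fun k => f (d - 1 - k)).prod⁻¹ := by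
  induction d with
  | zero => simp
  | succ d ih =>
    rw [List.prod_range_succ, List.prod_range_succ', ih, mul_inv_rev, Nat.add_sub_cancel,
      Nat.sub_zero]
    congr 3
    exact List.map_congr_left fun k _ => by congr 1; omega

lemma commute_σ {m i j : ℕ} (hij : i + 1 < j) : Commute (σ m i) (σ m j) := by
  unfold σ
  split_ifs with hi hj hj
  · exact PresentedGroup.mk_eq_mk_of_mul_inv_mem (Or.inl ⟨_, _, by simp only; omega, rfl⟩)
  all_goals simp

lemma σ_braid {m i : ℕ} (hi : 1 ≤ i) (hm : i + 1 ≤ m - 1) :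
    σ m i * σ m (i + 1) * σ m i = σ m (i + 1) * σ m i * σ m (i + 1) := by
  rw [σ, σ, dif_pos ⟨hi, by omega⟩, dif_pos ⟨by omega, hm⟩]
  exact PresentedGroup.mk_eq_mk_of_mul_inv_mem (Or.inr ⟨_, _, by simp only; omega, rfl⟩)

lemma σ_conj_σ_succ {m i : ℕ} (hi : 1 ≤ i) (hm : i + 1 ≤ m - 1) :
    σ m (i + 1) * σ m i * (σ m (i + 1))⁻¹ = (σ m i)⁻¹ * σ m (i + 1) * σ m i := by
  rw [mul_inv_eq_iff_eq_mul, mul_assoc, mul_assoc, eq_inv_mul_iff_mul_eq, ← mul_assoc,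
    ← mul_assoc, σ_braid hi hm]

lemma sigmaBr_of_le (m : ℕ) {j i : ℕ} (h : j ≤ i) : sigmaBr m j i = 1 := by
  simp [sigmaBr, Nat.sub_eq_zero_of_le h]

lemma sigmaBr_succ (m : ℕ) {j i : ℕ} (h : i ≤ j) :
    sigmaBr m (j + 1) i = σ m j * sigmaBr m j i := by
  rw [sigmaBr, show j + 1 - i = (j - i) + 1 by omega, List.prod_range_succ']
  congr 2
  exact List.map_congr_left fun k _ => by congr 1; omega

lemma commute_σ_sigmaBr (m : ℕ) {t j i : ℕ} (h : j < t) : Commute (σ m t) (sigmaBr m j i) :=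
  Commute.list_prod_right _ _ fun _ hx => by
    obtain ⟨k, hk, rfl⟩ := List.mem_map.mp hx
    exact (commute_σ (by simp only [List.mem_range] at hk; omega)).symm

lemma commute_sigmaBr (m : ℕ) {j i j' i' : ℕ} (h : j < i') :
    Commute (sigmaBr m j i) (sigmaBr m j' i') :=
  Commute.list_prod_right _ _ fun _ hx => by
    obtain ⟨k, hk, rfl⟩ := List.mem_map.mp hx
    exact (commute_σ_sigmaBr m (by simp only [List.mem_range] at hk; omega)).symm

lemma bandGen_succ (m : ℕ) {t s : ℕ} (h : s < t) :
    bandGen m (t + 1) s = σ m t * bandGen m t s * (σ m t)⁻¹ := by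
  simp only [bandGen, sigmaBr_succ m h, mul_inv_rev, mul_assoc]

lemma bandGen_eq_inv_sigmaBr_mul_sigmaBr (m : ℕ) {t s : ℕ} (hs : 1 ≤ s) (hst : s ≤ t)
    (htm : t + 1 ≤ m) : bandGen m (t + 1) s = (sigmaBr m t s)⁻¹ * sigmaBr m (t + 1) s := by
  induction t, hst using Nat.le_induction with
  | base => simp [bandGen, sigmaBr_of_le, sigmaBr_succ]
  | succ t hst ih =>
    rw [bandGen_succ m (by omega), ih (by omega), sigmaBr_succ m (j := t + 1) (by omega),
      sigmaBr_succ m hst]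
    set x := σ m (t + 1)
    set y := σ m t
    set S := sigmaBr m t s
    have hS : Commute x S := commute_σ_sigmaBr m (Nat.lt_succ_self t)
    calc x * (S⁻¹ * (y * S)) * x⁻¹ = (x * S * x⁻¹)⁻¹ * (x * y * x⁻¹) * (x * S * x⁻¹) := by group
      _ = S⁻¹ * (y⁻¹ * x * y) * S := by
        rw [hS.mul_inv_cancel, σ_conj_σ_succ (by omega) (by omega)]
      _ = (y * S)⁻¹ * (x * (y * S)) := by group

lemma bandGen_succ_self (m s : ℕ) : bandGen m (s + 1) s = σ m s := by
  simp [bandGen, sigmaBr_of_le]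

lemma map_desc_prod_sGen {n : ℕ} (θ' : ArtinTitsB (n - 1) →* BraidGroup (2 * n - 2))
    (hθ : ∀ i, 2 ≤ i → i ≤ n - 1 →
      θ' (sGen (n - 1) i) =
        bandGen (2 * n - 2) i (i - 1) * bandGen (2 * n - 2) (i + n - 1) (i + n - 2))
    {i j : ℕ} (hi : 1 ≤ i) (hij : i ≤ j) (hj : j ≤ n - 1) :
    θ' ((List.range (j - i)).map fun k => sGen (n - 1) (j - k)).prod =
      sigmaBr (2 * n - 2) j i * sigmaBr (2 * n - 2) (j + n - 1) (i + n - 1) := by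
  induction j, hij using Nat.le_induction with
  | base => simp [sigmaBr_of_le]
  | succ j hij ih =>
    have hθj : θ' (sGen (n - 1) (j + 1)) = σ (2 * n - 2) j * σ (2 * n - 2) (j + n - 1) := by
      rw [hθ (j + 1) (by omega) hj, Nat.add_sub_cancel, show j + 1 + n - 1 = j + n - 1 + 1 by omega,
        show j + 1 + n - 2 = j + n - 1 by omega, bandGen_succ_self, bandGen_succ_self]
    have hcomm : Commute (σ (2 * n - 2) (j + n - 1)) (sigmaBr (2 * n - 2) j i) :=
      commute_σ_sigmaBr _ (by omega)
    rw [show j + 1 - i = j - i + 1 by omega, List.prod_range_succ', map_mul, Nat.sub_zero, hθj,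
      show j + 1 + n - 1 = j + n - 1 + 1 by omega, sigmaBr_succ _ hij, sigmaBr_succ _ (by omega)]
    have hrest : ((List.range (j - i)).map fun k => sGen (n - 1) (j + 1 - (k + 1))) =
        (List.range (j - i)).map fun k => sGen (n - 1) (j - k) :=
      List.map_congr_left fun k _ => by rw [Nat.add_sub_add_right]
    rw [hrest, ih (by omega), mul_assoc, ← mul_assoc (σ _ (j + n - 1)), hcomm.eq]
    simp only [mul_assoc]

end Braid

open Braid in
theorem theta_of_partial_product_general (n : ℕ) (u v : ℕ)
    (hu : 1 ≤ u) (huv : u < v) (hv : v ≤ n - 1)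
    (θ' : Braid.ArtinTitsB (n - 1) →* Braid.BraidGroup (2 * n - 2))
    (hθ2 : ∀ i, 2 ≤ i → i ≤ n - 1 →
      θ' (Braid.sGen (n - 1) i) =
        Braid.bandGen (2 * n - 2) i (i - 1) *
        Braid.bandGen (2 * n - 2) (i + n - 1) (i + n - 2)) :
    θ' (((List.range (v - 1 - u)).map (fun k => (Braid.sGen (n - 1) (u + 1 + k))⁻¹)).prod *
        ((List.range (v - u)).map (fun k => Braid.sGen (n - 1) (v - k))).prod) =
      Braid.bandGen (2 * n - 2) v u * Braid.bandGen (2 * n - 2) (v + n - 1) (u + n - 1) := by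
  obtain ⟨w, rfl⟩ : ∃ w, v = w + 1 := ⟨v - 1, by omega⟩
  have hinv : ((List.range (w + 1 - 1 - u)).map fun k => (sGen (n - 1) (u + 1 + k))⁻¹).prod =
      ((List.range (w - u)).map fun k => sGen (n - 1) (w - k)).prod⁻¹ := by
    rw [Nat.add_sub_cancel, prod_range_map_inv]
    congr 2
    exact List.map_congr_left fun k hk => by
      simp only [List.mem_range] at hk; congr 1; omega
  rw [map_mul, hinv, map_inv, map_desc_prod_sGen θ' hθ2 hu (by omega) (by omega),
    map_desc_prod_sGen θ' hθ2 hu (by omega) hv, show w + 1 + n - 1 = w + n - 1 + 1 by omega,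
    bandGen_eq_inv_sigmaBr_mul_sigmaBr _ hu (by omega) (by omega),
    bandGen_eq_inv_sigmaBr_mul_sigmaBr _ (by omega) (by omega) (by omega)]
  have hcomm : Commute (sigmaBr (2 * n - 2) w u) (sigmaBr (2 * n - 2) (w + n - 1) (u + n - 1)) :=
    commute_sigmaBr _ (by omega)
  have hcomm' :
      Commute (sigmaBr (2 * n - 2) (w + 1) u) (sigmaBr (2 * n - 2) (w + n - 1) (u + n - 1)) :=
    commute_sigmaBr _ (by omega)
  rw [hcomm.eq, mul_inv_rev, mul_assoc, ← mul_assoc _ (sigmaBr _ (w + 1) u),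
    ← hcomm'.inv_right.eq]
  simp only [mul_assoc]

/-- for `1 ≤ u < v ≤ n-1`, one has
`θ'((s_{u+1}⁻¹⋯s_{v-1}⁻¹)(s_v s_{v-1}⋯s_{u+1})) = a_{v,u} a_{v+n-1,u+n-1}` in `B_{2n-2}`. -/
theorem theta_of_partial_product (n : ℕ) (hn : 3 ≤ n) (u v : ℕ)
    (hu : 1 ≤ u) (huv : u < v) (hv : v ≤ n - 1)
    (θ' : Braid.ArtinTitsB (n - 1) →* Braid.BraidGroup (2 * n - 2))
    (hθ1 : θ' (Braid.sGen (n - 1) 1) = Braid.bandGen (2 * n - 2) n 1)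
    (hθ2 : ∀ i, 2 ≤ i → i ≤ n - 1 →
      θ' (Braid.sGen (n - 1) i) =
        Braid.bandGen (2 * n - 2) i (i - 1) *
        Braid.bandGen (2 * n - 2) (i + n - 1) (i + n - 2)) :
    θ' (((List.range (v - 1 - u)).map (fun k => (Braid.sGen (n - 1) (u + 1 + k))⁻¹)).prod *
        ((List.range (v - u)).map (fun k => Braid.sGen (n - 1) (v - k))).prod) =
      Braid.bandGen (2 * n - 2) v u * Braid.bandGen (2 * n - 2) (v + n - 1) (u + n - 1) :=
  theta_of_partial_product_general n u v hu huv hv θ' hθ2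
end
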